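/- arXiv:2206.06778 — 6 statements merged into one kernel-verified Lean document; each statement's English description precedes it below -/
import Mathlib

section
/- Let X be a Banach space and suppose a cocycle U(n,m) (with U(n,m) = A(n−1)···A(m) for n > m and U(m,m) = Id) admits a tempered exponential dichotomy along a fixed orbit: there are projections P(n) on X, a constant α > 0 and positive numbers K(n) such that P(n+1)A(n) = A(n)P(n), ‖U(n,m)P(m)‖ ≤ K(m)e^{-α(n-m)} for n ≥ m, the restrictions of A(n) to the kernels of P(n) are invertible onto the kernels of P(n+1) with ‖U(n,m)(Id − P(m))‖ ≤ K(m)e^{-α(m-n)} for n ≤ m, and lim_{m→-∞} (1/|m|) ln K(m) = 0. If x : ℤ → X satisfies x(n+1) = A(n)x(n) for all n ∈ ℤ and sup_{n∈ℤ} e^{-β n}|x(n)| < ∞ for some β with |β| < α, then x(n) = 0 for all n. -/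
/-!
Write `x(n) = P(n)x(n) + (1 - P(n))x(n)`. Pushing `x(m)` forward to time `n` from the far past
bounds the stable part by `K(m) e^{-α(n-m)} · C e^{βm}`, and pulling `x(m)` back from the far future
bounds the unstable part by `K(m) e^{-α(m-n)} · C e^{βm}`. Since `|β| < α` and `K` grows
subexponentially, both bounds tend to `0`, so both parts vanish.
-/

open Filter Topology Real

section Tempered

theorem tendsto_mul_exp_neg_mul_of_log_div_tendsto_zero {ι : Type*} {l : Filter ι}
    {K r : ι → ℝ} {γ : ℝ} (hK : ∀ i, 0 < K i) (hr : Tendsto r l atTop)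
    (htemp : Tendsto (fun i => log (K i) / r i) l (𝓝 0)) (hγ : 0 < γ) :
    Tendsto (fun i => K i * exp (-γ * r i)) l (𝓝 0) := by
  have hexponent : Tendsto (fun i => r i * (log (K i) / r i - γ)) l atBot :=
    hr.atTop_mul_neg (neg_lt_zero.2 hγ) (by simpa using htemp.sub_const γ)
  refine (tendsto_exp_atBot.comp hexponent).congr' ?_
  filter_upwards [hr.eventually_gt_atTop 0] with i hi
  rw [Function.comp_apply, mul_sub, mul_div_cancel₀ _ hi.ne', sub_eq_add_neg, exp_add,
    exp_log (hK i)]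
  ring_nf

variable {K : ℤ → ℝ} {γ : ℝ}

theorem tendsto_mul_exp_mul_atBot_of_tempered (hK : ∀ m, 0 < K m)
    (htemp : Tendsto (fun m : ℤ => log (K m) / |(m : ℝ)|) atBot (𝓝 0)) (hγ : 0 < γ) :
    Tendsto (fun m : ℤ => K m * exp (γ * m)) atBot (𝓝 0) := by
  have hr : Tendsto (fun m : ℤ => -(m : ℝ)) atBot atTop :=
    tendsto_neg_atBot_atTop.comp (tendsto_intCast_atBot_iff.2 tendsto_id)
  have htemp' : Tendsto (fun m : ℤ => log (K m) / -(m : ℝ)) atBot (𝓝 0) := by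
    refine htemp.congr' ?_
    filter_upwards [eventually_le_atBot 0] with m hm
    rw [abs_of_nonpos (by exact_mod_cast hm)]
  simpa using tendsto_mul_exp_neg_mul_of_log_div_tendsto_zero hK hr htemp' hγ

theorem tendsto_mul_exp_neg_mul_atTop_of_tempered (hK : ∀ m, 0 < K m)
    (htemp : Tendsto (fun m : ℤ => log (K m) / |(m : ℝ)|) atTop (𝓝 0)) (hγ : 0 < γ) :
    Tendsto (fun m : ℤ => K m * exp (-γ * m)) atTop (𝓝 0) := by
  have htemp' : Tendsto (fun m : ℤ => log (K m) / (m : ℝ)) atTop (𝓝 0) := by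
    refine htemp.congr' ?_
    filter_upwards [eventually_ge_atTop 0] with m hm
    rw [abs_of_nonneg (by exact_mod_cast hm)]
  exact tendsto_mul_exp_neg_mul_of_log_div_tendsto_zero hK tendsto_intCast_atTop_atTop htemp' hγ

end Tempered

theorem eq_zero_of_eventually_eq_apply_of_tendsto {ι 𝕜 E F : Type*} [NontriviallyNormedField 𝕜]
    [SeminormedAddCommGroup E] [NormedAddCommGroup F] [NormedSpace 𝕜 E] [NormedSpace 𝕜 F]
    {l : Filter ι} [l.NeBot] {v : F} {T : ι → E →L[𝕜] F} {y : ι → E} {f : ι → ℝ}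
    (hv : ∀ᶠ i in l, v = T i (y i)) (hf : ∀ᶠ i in l, ‖T i‖ * ‖y i‖ ≤ f i)
    (hf0 : Tendsto f l (𝓝 0)) : v = 0 := by
  refine norm_le_zero_iff.mp (ge_of_tendsto hf0 ?_)
  filter_upwards [hv, hf] with i hvi hfi
  rw [hvi]
  exact ((T i).le_opNorm (y i)).trans hfi

section Evolution

variable {R M : Type*} [Semiring R] [TopologicalSpace M] [AddCommMonoid M] [Module R M]
  {A P : ℤ → M →L[R] M} {U : ℤ → ℤ → M →L[R] M}

theorem evolution_apply_of_solution (hU0 : ∀ m, U m m = 1)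
    (hUstep : ∀ n m, m ≤ n → U (n + 1) m = (A n).comp (U n m)) {x : ℤ → M}
    (hsol : ∀ n, x (n + 1) = A n (x n)) ⦃m n : ℤ⦄ (hmn : m ≤ n) : U n m (x m) = x n := by
  induction n, hmn using Int.leInduction with
  | base => simp [hU0]
  | succ k hk ih => rw [hUstep k m hk, ContinuousLinearMap.comp_apply, ih, hsol]

theorem evolution_comp_proj_comm (hU0 : ∀ m, U m m = 1)
    (hUstep : ∀ n m, m ≤ n → U (n + 1) m = (A n).comp (U n m))
    (hcomm : ∀ n, (P (n + 1)).comp (A n) = (A n).comp (P n)) {m n : ℤ} (hmn : m ≤ n) :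
    (U n m).comp (P m) = (P n).comp (U n m) := by
  induction n, hmn using Int.leInduction with
  | base => rw [hU0]; rfl
  | succ k hk ih =>
    rw [hUstep k m hk, ContinuousLinearMap.comp_assoc, ih, ← ContinuousLinearMap.comp_assoc,
      ← hcomm, ContinuousLinearMap.comp_assoc]

end Evolution

section Dichotomy

variable {X : Type*} [NormedAddCommGroup X] [NormedSpace ℝ X] {K : ℤ → ℝ} {x : ℤ → X}
  {S : ℤ → X →L[ℝ] X} {v : X} {α β C : ℝ} {n : ℤ}

theorem eq_zero_of_forall_le_eq_apply_of_stable_decay (hK : ∀ m, 0 < K m)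
    (htemp : Tendsto (fun m : ℤ => log (K m) / |(m : ℝ)|) atBot (𝓝 0)) (hβ : -α < β)
    (hx : ∀ m, ‖x m‖ ≤ C * exp (β * m))
    (hS : ∀ m ≤ n, ‖S m‖ ≤ K m * exp (-α * ((n : ℝ) - m))) (hv : ∀ m ≤ n, v = S m (x m)) :
    v = 0 := by
  have hdecay : Tendsto (fun m : ℤ => K m * exp (-α * ((n : ℝ) - m)) * (C * exp (β * m)))
      atBot (𝓝 0) := by
    convert (tendsto_mul_exp_mul_atBot_of_tempered hK htemp (γ := α + β) (by linarith)).const_mul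
      (C * exp (-α * n)) using 2 with m
    · rw [show -α * ((n : ℝ) - m) = -α * n + (α + β) * m - β * m by ring, exp_sub, exp_add]
      field_simp
    · simp
  refine eq_zero_of_eventually_eq_apply_of_tendsto (eventually_atBot.2 ⟨n, hv⟩)
    (eventually_atBot.2 ⟨n, fun m hm => ?_⟩) hdecay
  exact mul_le_mul (hS m hm) (hx m) (norm_nonneg _) (mul_nonneg (hK m).le (exp_pos _).le)

theorem eq_zero_of_forall_ge_eq_apply_of_unstable_decay (hK : ∀ m, 0 < K m)
    (htemp : Tendsto (fun m : ℤ => log (K m) / |(m : ℝ)|) atTop (𝓝 0)) (hβ : β < α)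
    (hx : ∀ m, ‖x m‖ ≤ C * exp (β * m))
    (hS : ∀ m ≥ n, ‖S m‖ ≤ K m * exp (-α * ((m : ℝ) - n))) (hv : ∀ m ≥ n, v = S m (x m)) :
    v = 0 := by
  have hdecay : Tendsto (fun m : ℤ => K m * exp (-α * ((m : ℝ) - n)) * (C * exp (β * m)))
      atTop (𝓝 0) := by
    convert (tendsto_mul_exp_neg_mul_atTop_of_tempered hK htemp (γ := α - β)
      (by linarith)).const_mul (C * exp (α * n)) using 2 with m
    · rw [show -α * ((m : ℝ) - n) = α * n + -(α - β) * m - β * m by ring, exp_sub, exp_add]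
      field_simp
    · simp
  refine eq_zero_of_eventually_eq_apply_of_tendsto (eventually_atTop.2 ⟨n, hv⟩)
    (eventually_atTop.2 ⟨n, fun m hm => ?_⟩) hdecay
  exact mul_le_mul (hS m hm) (hx m) (norm_nonneg _) (mul_nonneg (hK m).le (exp_pos _).le)

end Dichotomy

theorem stmt_3_general {X : Type*} [NormedAddCommGroup X] [NormedSpace ℝ X]
    (A : ℤ → X →L[ℝ] X) (U : ℤ → ℤ → X →L[ℝ] X) (P : ℤ → X →L[ℝ] X)
    (α β : ℝ) (K : ℤ → ℝ)
    (hβ : |β| < α) (hK : ∀ n, 0 < K n)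
    (hU0 : ∀ m : ℤ, U m m = 1)
    (hUstep : ∀ n m : ℤ, m ≤ n → U (n + 1) m = (A n).comp (U n m))
    (hcomm : ∀ n : ℤ, (P (n + 1)).comp (A n) = (A n).comp (P n))
    (hs : ∀ n m : ℤ, m ≤ n →
      ‖(U n m).comp (P m)‖ ≤ K m * Real.exp (-α * ((n : ℝ) - (m : ℝ))))
    (hu : ∀ n m : ℤ, n ≤ m →
      ‖(U n m).comp (1 - P m)‖ ≤ K m * Real.exp (-α * ((m : ℝ) - (n : ℝ))))
    (hinv : ∀ n m : ℤ, n ≤ m → (U n m).comp ((1 - P m).comp (U m n)) = 1 - P n)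
    (htempneg : Filter.Tendsto (fun m : ℤ => Real.log (K m) / |(m : ℝ)|)
      Filter.atBot (nhds 0))
    (htemppos : Filter.Tendsto (fun m : ℤ => Real.log (K m) / |(m : ℝ)|)
      Filter.atTop (nhds 0))
    (x : ℤ → X)
    (hsol : ∀ n : ℤ, x (n + 1) = A n (x n))
    (hbdd : ∃ C : ℝ, ∀ n : ℤ, Real.exp (-β * (n : ℝ)) * ‖x n‖ ≤ C) :
    ∀ n : ℤ, x n = 0 := by
  obtain ⟨C, hC⟩ := hbdd
  have hx : ∀ m : ℤ, ‖x m‖ ≤ C * exp (β * m) := fun m => by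
    rw [← div_le_iff₀ (exp_pos _), div_eq_mul_inv, ← exp_neg, ← neg_mul, mul_comm]
    exact hC m
  have hevol := evolution_apply_of_solution hU0 hUstep hsol
  intro n
  have hstable : P n (x n) = 0 := by
    refine eq_zero_of_forall_le_eq_apply_of_stable_decay hK htempneg (abs_lt.1 hβ).1 hx
      (hs n) fun m hm => ?_
    rw [evolution_comp_proj_comm hU0 hUstep hcomm hm, ContinuousLinearMap.comp_apply, hevol hm]
  have hunstable : (1 - P n) (x n) = 0 := by
    refine eq_zero_of_forall_ge_eq_apply_of_unstable_decay hK htemppos (abs_lt.1 hβ).2 hx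
      (hu n) fun m hm => ?_
    rw [← hinv n m hm, ← hevol hm]
    rfl
  simpa [hstable] using hunstable

/-- under a tempered exponential dichotomy along an orbit, the only
solution of `x(n+1) = A(n)x(n)` on `ℤ` with `sup_n e^{-βn}‖x(n)‖ < ∞` for some
`|β| < α` is the zero solution. -/
theorem stmt_3 {X : Type*} [NormedAddCommGroup X] [NormedSpace ℝ X] [CompleteSpace X]
    (A : ℤ → X →L[ℝ] X) (U : ℤ → ℤ → X →L[ℝ] X) (P : ℤ → X →L[ℝ] X)
    (α β : ℝ) (K : ℤ → ℝ)
    (hα : 0 < α) (hβ : |β| < α) (hK : ∀ n, 0 < K n)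
    (hU0 : ∀ m : ℤ, U m m = 1)
    (hUstep : ∀ n m : ℤ, m ≤ n → U (n + 1) m = (A n).comp (U n m))
    (hproj : ∀ n : ℤ, (P n).comp (P n) = P n)
    (hcomm : ∀ n : ℤ, (P (n + 1)).comp (A n) = (A n).comp (P n))
    (hs : ∀ n m : ℤ, m ≤ n →
      ‖(U n m).comp (P m)‖ ≤ K m * Real.exp (-α * ((n : ℝ) - (m : ℝ))))
    (hu : ∀ n m : ℤ, n ≤ m →
      ‖(U n m).comp (1 - P m)‖ ≤ K m * Real.exp (-α * ((m : ℝ) - (n : ℝ))))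
    (hinv : ∀ n m : ℤ, n ≤ m → (U n m).comp ((1 - P m).comp (U m n)) = 1 - P n)
    (htempneg : Filter.Tendsto (fun m : ℤ => Real.log (K m) / |(m : ℝ)|)
      Filter.atBot (nhds 0))
    (htemppos : Filter.Tendsto (fun m : ℤ => Real.log (K m) / |(m : ℝ)|)
      Filter.atTop (nhds 0))
    (x : ℤ → X)
    (hsol : ∀ n : ℤ, x (n + 1) = A n (x n))
    (hbdd : ∃ C : ℝ, ∀ n : ℤ, Real.exp (-β * (n : ℝ)) * ‖x n‖ ≤ C) :
    ∀ n : ℤ, x n = 0 :=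
  stmt_3_general A U P α β K hβ hK hU0 hUstep hcomm hs hu hinv htempneg htemppos x hsol hbdd
end

section
/- Let X be a Banach space and A(n) ∈ L(X) for n ∈ ℤ. Suppose there are projections P(n), α > 0, and tempered positive numbers K(n) giving an exponential dichotomy as in the standard definition: ‖U(n,m)P(m)‖ ≤ K(m)e^{-α(n-m)} for n ≥ m and ‖U(n,m)(Id − P(m))‖ ≤ K(m)e^{α(n-m)} for n ≤ m, with P(n+1)A(n) = A(n)P(n). Define the Green function G(n,m) = U(n,m)P(m) for n ≥ m and G(n,m) = −U(n,m)(Id − P(m)) for n < m. Then for any β with |β| < α and any sequence f with sup_k K(k)e^{-β k}|f(k)| < ∞, the sequence x(n) = Σ_{k∈ℤ} G(n,k)f(k) is well-defined (absolutely convergent), satisfies x(n+1) = A(n)x(n) + f(n+1) for all n ∈ ℤ, and sup_n e^{-β n}|x(n)| ≤ γ · sup_k K(k)e^{-β k}|f(k)| where γ = (1 + e^{-(α-β)})/(1 - e^{-(α-|β|)}). -/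
/-!
The two halves of the dichotomy combine into `‖G(n,k)‖ ≤ K(k) e^{-α|n-k|}`, so the weight
condition on `f` gives `‖G(n,k) f(k)‖ ≤ M e^{βn} e^{β(k-n) - α|k-n|}`. The two-sided geometric
series `∑_j e^{βj - α|j|}` converges for `|β| < α`, with sum at most `γ`. The difference equation
holds termwise: `G(n+1,k) = A(n) G(n,k)` except at `k = n+1`, where the jump of `G` across the
diagonal contributes `f(n+1)`.
-/

open Real

theorem hasSum_exp_mul_sub_mul_abs {α β : ℝ} (hβ : |β| < α) :
    HasSum (fun j : ℤ => exp (β * j - α * |(j : ℝ)|))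
      ((1 - exp (-(α - β)))⁻¹ + exp (-(α + β)) / (1 - exp (-(α + β)))) := by
  have hβα : β < α := (le_abs_self β).trans_lt hβ
  have hβα' : -β < α := (neg_le_abs β).trans_lt hβ
  refine HasSum.of_nat_of_neg_add_one ?_ ?_
  · have hpow (m : ℕ) : exp (β * (m : ℤ) - α * |((m : ℤ) : ℝ)|) = exp (-(α - β)) ^ m := by
      rw [← exp_nat_mul]; push_cast; rw [abs_of_nonneg m.cast_nonneg]; ring_nf
    simp only [hpow]
    exact hasSum_geometric_of_lt_one (exp_pos _).le (exp_lt_one_iff.2 (by linarith))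
  · have hpow (m : ℕ) : exp (β * (-((m : ℤ) + 1) : ℤ) - α * |((-((m : ℤ) + 1) : ℤ) : ℝ)|) =
        exp (-(α + β)) * exp (-(α + β)) ^ m := by
      rw [← exp_nat_mul, ← exp_add]; push_cast
      rw [abs_of_neg (by linarith [(m.cast_nonneg : (0:ℝ) ≤ m)])]; ring_nf
    simp only [hpow, div_eq_mul_inv]
    exact (hasSum_geometric_of_lt_one (exp_pos _).le (exp_lt_one_iff.2 (by linarith))).mul_left _

theorem inv_one_sub_add_div_one_sub_le {a b v : ℝ} (ha : 0 ≤ a) (hav : a ≤ v) (hbv : b ≤ v)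
    (hv : v < 1) : (1 - a)⁻¹ + b / (1 - b) ≤ (1 + a) / (1 - v) := by
  have h1a : 0 < 1 - a := by linarith
  have h1b : 0 < 1 - b := by linarith
  have h1v : 0 < 1 - v := by linarith
  have hb : b / (1 - b) ≤ v / (1 - v) := by
    rw [div_le_div_iff₀ h1b h1v]; nlinarith
  have ha' : (1 - a)⁻¹ + v / (1 - v) ≤ (1 + a) / (1 - v) := by
    rw [inv_eq_one_div, div_add_div _ _ h1a.ne' h1v.ne', div_le_div_iff₀ (mul_pos h1a h1v) h1v]
    nlinarith [mul_nonneg ha (sub_nonneg.2 hav)]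
  linarith

theorem inv_one_sub_exp_add_le {α β : ℝ} (hβ : |β| < α) :
    (1 - exp (-(α - β)))⁻¹ + exp (-(α + β)) / (1 - exp (-(α + β))) ≤
      (1 + exp (-(α - β))) / (1 - exp (-(α - |β|))) := by
  refine inv_one_sub_add_div_one_sub_le (exp_pos _).le (exp_le_exp.2 ?_) (exp_le_exp.2 ?_)
    (exp_lt_one_iff.2 (by linarith))
  · linarith [le_abs_self β]
  · linarith [neg_le_abs β]

section GreenKernel

variable {X : Type*} [NormedAddCommGroup X] [NormedSpace ℝ X]
  {G : ℤ → ℤ → X →L[ℝ] X} {K : ℤ → ℝ} {α β M : ℝ} {f : ℤ → X}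

theorem norm_apply_le_mul_exp_mul_sub_mul_abs
    (hG : ∀ n m : ℤ, ‖G n m‖ ≤ K m * exp (-α * |(n : ℝ) - m|))
    (hf : ∀ k : ℤ, K k * exp (-β * k) * ‖f k‖ ≤ M) (n k : ℤ) :
    ‖G n k (f k)‖ ≤ M * exp (β * n) * exp (β * (k - n : ℤ) - α * |((k - n : ℤ) : ℝ)|) := by
  have hKf : K k * ‖f k‖ ≤ M * exp (β * k) := by
    calc K k * ‖f k‖ = K k * exp (-β * k) * ‖f k‖ * exp (β * k) := by
          rw [mul_right_comm _ (exp _), mul_assoc _ (exp _), ← exp_add]; simp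
      _ ≤ M * exp (β * k) := by gcongr; exact hf k
  calc ‖G n k (f k)‖ ≤ K k * exp (-α * |(n : ℝ) - k|) * ‖f k‖ :=
        (G n k).le_of_opNorm_le (hG n k) _
    _ = exp (-α * |(n : ℝ) - k|) * (K k * ‖f k‖) := by ring
    _ ≤ exp (-α * |(n : ℝ) - k|) * (M * exp (β * k)) := by gcongr
    _ = M * exp (β * n) * exp (β * (k - n : ℤ) - α * |((k - n : ℤ) : ℝ)|) := by
        rw [mul_assoc M, ← exp_add, mul_left_comm, ← exp_add, abs_sub_comm]
        push_cast
        ring_nf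

theorem summable_norm_apply_of_norm_le_mul_exp
    (hG : ∀ n m : ℤ, ‖G n m‖ ≤ K m * exp (-α * |(n : ℝ) - m|))
    (hf : ∀ k : ℤ, K k * exp (-β * k) * ‖f k‖ ≤ M) (hβ : |β| < α) (n : ℤ) :
    Summable fun k : ℤ => ‖G n k (f k)‖ :=
  .of_nonneg_of_le (fun _ => norm_nonneg _) (norm_apply_le_mul_exp_mul_sub_mul_abs hG hf n)
    (((Equiv.subRight n).summable_iff.2 (hasSum_exp_mul_sub_mul_abs hβ).summable).mul_left _)

theorem exp_mul_norm_tsum_apply_le_of_norm_le_mul_exp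
    (hG : ∀ n m : ℤ, ‖G n m‖ ≤ K m * exp (-α * |(n : ℝ) - m|))
    (hf : ∀ k : ℤ, K k * exp (-β * k) * ‖f k‖ ≤ M) (hβ : |β| < α) (n : ℤ) :
    exp (-β * n) * ‖∑' k : ℤ, G n k (f k)‖ ≤
      (1 + exp (-(α - β))) / (1 - exp (-(α - |β|))) * M := by
  have hM : 0 ≤ M := by
    have := (norm_nonneg _).trans (norm_apply_le_mul_exp_mul_sub_mul_abs hG hf n n)
    exact nonneg_of_mul_nonneg_left (nonneg_of_mul_nonneg_left this (exp_pos _)) (exp_pos _)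
  have hweight := ((Equiv.subRight n).hasSum_iff.2 (hasSum_exp_mul_sub_mul_abs hβ)).mul_left
    (M * exp (β * n))
  calc exp (-β * n) * ‖∑' k : ℤ, G n k (f k)‖
      ≤ exp (-β * n) * (M * exp (β * n) *
          ((1 - exp (-(α - β)))⁻¹ + exp (-(α + β)) / (1 - exp (-(α + β))))) := by
        gcongr
        exact tsum_of_norm_bounded hweight (norm_apply_le_mul_exp_mul_sub_mul_abs hG hf n)
    _ = M * ((1 - exp (-(α - β)))⁻¹ + exp (-(α + β)) / (1 - exp (-(α + β)))) := by
        rw [← mul_assoc, mul_left_comm, ← exp_add]; simp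
    _ ≤ M * ((1 + exp (-(α - β))) / (1 - exp (-(α - |β|)))) := by
        gcongr; exact inv_one_sub_exp_add_le hβ
    _ = _ := mul_comm _ _

end GreenKernel

section Dichotomy

variable {X : Type*} [NormedAddCommGroup X] [NormedSpace ℝ X]
  {A : ℤ → X →L[ℝ] X} {U : ℤ → ℤ → X →L[ℝ] X} {P : ℤ → X →L[ℝ] X} {G : ℤ → ℤ → X →L[ℝ] X}
  {K : ℤ → ℝ} {α : ℝ}

theorem norm_green_le
    (hs : ∀ n m : ℤ, m ≤ n → ‖(U n m).comp (P m)‖ ≤ K m * exp (-α * ((n : ℝ) - (m : ℝ))))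
    (hu : ∀ n m : ℤ, n ≤ m → ‖(U n m).comp (1 - P m)‖ ≤ K m * exp (-α * ((m : ℝ) - (n : ℝ))))
    (hGs : ∀ n m : ℤ, m ≤ n → G n m = (U n m).comp (P m))
    (hGu : ∀ n m : ℤ, n < m → G n m = -((U n m).comp (1 - P m))) (n m : ℤ) :
    ‖G n m‖ ≤ K m * exp (-α * |(n : ℝ) - m|) := by
  rcases le_or_gt m n with hmn | hnm
  · rw [hGs n m hmn, abs_of_nonneg (sub_nonneg.2 (Int.cast_le.2 hmn))]
    exact hs n m hmn
  · rw [hGu n m hnm, norm_neg, abs_sub_comm, abs_of_pos (sub_pos.2 (Int.cast_lt.2 hnm))]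
    exact hu n m hnm.le

theorem green_succ_apply (hU0 : ∀ m : ℤ, U m m = 1)
    (hUstep : ∀ n m : ℤ, m ≤ n → U (n + 1) m = (A n).comp (U n m))
    (hback : ∀ n m : ℤ, n < m →
      (A n).comp ((U n m).comp (1 - P m)) = (U (n + 1) m).comp (1 - P m))
    (hGs : ∀ n m : ℤ, m ≤ n → G n m = (U n m).comp (P m))
    (hGu : ∀ n m : ℤ, n < m → G n m = -((U n m).comp (1 - P m))) (n k : ℤ) (x : X) :
    G (n + 1) k x = A n (G n k x) + if k = n + 1 then x else 0 := by
  rcases lt_trichotomy k (n + 1) with hk | rfl | hk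
  · have hkn : k ≤ n := Int.lt_add_one_iff.1 hk
    rw [if_neg hk.ne, add_zero, hGs _ _ hk.le, hGs n k hkn, hUstep n k hkn]
    rfl
  · have hjump : (A n).comp (G n (n + 1)) = P (n + 1) - 1 := by
      rw [hGu n _ (lt_add_one n), ContinuousLinearMap.comp_neg, hback n _ (lt_add_one n), hU0]
      ext y
      simp
    rw [if_pos rfl, hGs _ _ le_rfl, hU0, ← ContinuousLinearMap.comp_apply, hjump]
    simp
  · rw [if_neg hk.ne', add_zero, hGu _ _ hk, hGu n k (by omega)]
    simp only [neg_apply, map_neg, ← ContinuousLinearMap.comp_apply, hback n k (by omega)]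

theorem hasSum_green_succ_apply (hU0 : ∀ m : ℤ, U m m = 1)
    (hUstep : ∀ n m : ℤ, m ≤ n → U (n + 1) m = (A n).comp (U n m))
    (hback : ∀ n m : ℤ, n < m →
      (A n).comp ((U n m).comp (1 - P m)) = (U (n + 1) m).comp (1 - P m))
    (hGs : ∀ n m : ℤ, m ≤ n → G n m = (U n m).comp (P m))
    (hGu : ∀ n m : ℤ, n < m → G n m = -((U n m).comp (1 - P m))) {f : ℤ → X} {n : ℤ} {x : X}
    (hx : HasSum (fun k => G n k (f k)) x) :
    HasSum (fun k => G (n + 1) k (f k)) (A n x + f (n + 1)) := by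
  simp only [green_succ_apply hU0 hUstep hback hGs hGu n]
  have hdelta : HasSum (fun k => if k = n + 1 then f k else 0) (f (n + 1)) := by
    simpa using hasSum_single (n + 1) fun k hk => if_neg hk
  exact ((A n).hasSum hx).add hdelta

end Dichotomy

theorem stmt_4_general {X : Type*} [NormedAddCommGroup X] [NormedSpace ℝ X] [CompleteSpace X]
    (A : ℤ → X →L[ℝ] X) (U : ℤ → ℤ → X →L[ℝ] X) (P : ℤ → X →L[ℝ] X)
    (G : ℤ → ℤ → X →L[ℝ] X)
    (α β : ℝ) (K : ℤ → ℝ)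
    (hβ : |β| < α)
    (hU0 : ∀ m : ℤ, U m m = 1)
    (hUstep : ∀ n m : ℤ, m ≤ n → U (n + 1) m = (A n).comp (U n m))
    (hs : ∀ n m : ℤ, m ≤ n →
      ‖(U n m).comp (P m)‖ ≤ K m * Real.exp (-α * ((n : ℝ) - (m : ℝ))))
    (hu : ∀ n m : ℤ, n ≤ m →
      ‖(U n m).comp (1 - P m)‖ ≤ K m * Real.exp (-α * ((m : ℝ) - (n : ℝ))))
    (hback : ∀ n m : ℤ, n < m →
      (A n).comp ((U n m).comp (1 - P m)) = (U (n + 1) m).comp (1 - P m))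
    (hGs : ∀ n m : ℤ, m ≤ n → G n m = (U n m).comp (P m))
    (hGu : ∀ n m : ℤ, n < m → G n m = -((U n m).comp (1 - P m)))
    (f : ℤ → X) (M : ℝ)
    (hf : ∀ k : ℤ, K k * Real.exp (-β * (k : ℝ)) * ‖f k‖ ≤ M) :
    (∀ n : ℤ, Summable fun k : ℤ => ‖G n k (f k)‖) ∧
    (∀ n : ℤ, (∑' k : ℤ, G (n + 1) k (f k)) = A n (∑' k : ℤ, G n k (f k)) + f (n + 1)) ∧
    (∀ n : ℤ, Real.exp (-β * (n : ℝ)) * ‖∑' k : ℤ, G n k (f k)‖ ≤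
      (1 + Real.exp (-(α - β))) / (1 - Real.exp (-(α - |β|))) * M) := by
  have hG := norm_green_le hs hu hGs hGu
  have hsum := summable_norm_apply_of_norm_le_mul_exp hG hf hβ
  refine ⟨hsum, fun n => ?_, exp_mul_norm_tsum_apply_le_of_norm_le_mul_exp hG hf hβ⟩
  exact (hasSum_green_succ_apply hU0 hUstep hback hGs hGu (hsum n).of_norm.hasSum).tsum_eq

/-- given a tempered exponential dichotomy with Green function
`G(n,m) = U(n,m)P(m)` for `n ≥ m` and `-U(n,m)(Id-P(m))` for `n < m`, for any `|β| < α`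
and any input `f` with `sup_k K(k)e^{-βk}‖f(k)‖ ≤ M`, the series
`x(n) = Σ_k G(n,k)f(k)` converges absolutely, solves `x(n+1) = A(n)x(n) + f(n+1)`,
and satisfies `e^{-βn}‖x(n)‖ ≤ γ M` with `γ = (1+e^{-(α-β)})/(1-e^{-(α-|β|)})`. -/
theorem stmt_4 {X : Type*} [NormedAddCommGroup X] [NormedSpace ℝ X] [CompleteSpace X]
    (A : ℤ → X →L[ℝ] X) (U : ℤ → ℤ → X →L[ℝ] X) (P : ℤ → X →L[ℝ] X)
    (G : ℤ → ℤ → X →L[ℝ] X)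
    (α β : ℝ) (K : ℤ → ℝ)
    (hα : 0 < α) (hβ : |β| < α) (hK : ∀ n, 0 < K n)
    (hU0 : ∀ m : ℤ, U m m = 1)
    (hUstep : ∀ n m : ℤ, m ≤ n → U (n + 1) m = (A n).comp (U n m))
    (hproj : ∀ n : ℤ, (P n).comp (P n) = P n)
    (hcomm : ∀ n : ℤ, (P (n + 1)).comp (A n) = (A n).comp (P n))
    (hs : ∀ n m : ℤ, m ≤ n →
      ‖(U n m).comp (P m)‖ ≤ K m * Real.exp (-α * ((n : ℝ) - (m : ℝ))))
    (hu : ∀ n m : ℤ, n ≤ m →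
      ‖(U n m).comp (1 - P m)‖ ≤ K m * Real.exp (-α * ((m : ℝ) - (n : ℝ))))
    (hinv : ∀ n m : ℤ, n ≤ m → (U n m).comp ((1 - P m).comp (U m n)) = 1 - P n)
    (hback : ∀ n m : ℤ, n < m →
      (A n).comp ((U n m).comp (1 - P m)) = (U (n + 1) m).comp (1 - P m))
    (hGs : ∀ n m : ℤ, m ≤ n → G n m = (U n m).comp (P m))
    (hGu : ∀ n m : ℤ, n < m → G n m = -((U n m).comp (1 - P m)))
    (f : ℤ → X) (M : ℝ)
    (hf : ∀ k : ℤ, K k * Real.exp (-β * (k : ℝ)) * ‖f k‖ ≤ M) :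
    (∀ n : ℤ, Summable fun k : ℤ => ‖G n k (f k)‖) ∧
    (∀ n : ℤ, (∑' k : ℤ, G (n + 1) k (f k)) = A n (∑' k : ℤ, G n k (f k)) + f (n + 1)) ∧
    (∀ n : ℤ, Real.exp (-β * (n : ℝ)) * ‖∑' k : ℤ, G n k (f k)‖ ≤
      (1 + Real.exp (-(α - β))) / (1 - Real.exp (-(α - |β|))) * M) :=
  stmt_4_general A U P G α β K hβ hU0 hUstep hs hu hback hGs hGu f M hf
end

section
/- Let X be a Banach space and A(n) ∈ L(X) for n ∈ ℤ. Assume the following uniqueness property: the only two-sided sequence x : ℤ → X satisfying x(n+1) = A(n)x(n) for all n with sup_{n∈ℤ}|x(n)| < ∞ is x ≡ 0. Then the restriction of A(m) to the unstable subspace 𝒰(m) is an injective map into 𝒰(m+1), and it is surjective onto 𝒰(m+1); hence A(m)|_{𝒰(m)} : 𝒰(m) → 𝒰(m+1) is a linear bijection. -/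
/-- under the uniqueness property (the only bounded two-sided solution of
`x(n+1) = A(n)x(n)` is zero), the restriction of `A(m)` to the unstable subspace
`𝒰(m)` is injective into `𝒰(m+1)` and surjective onto `𝒰(m+1)`, hence a bijection. -/
theorem stmt_8 {X : Type*} [NormedAddCommGroup X] [NormedSpace ℝ X] [CompleteSpace X]
    (A : ℤ → X →L[ℝ] X)
    (huniq : ∀ x : ℤ → X, (∀ n : ℤ, x (n + 1) = A n (x n)) →
      (∃ C : ℝ, ∀ n : ℤ, ‖x n‖ ≤ C) → ∀ n : ℤ, x n = 0)
    (𝒰 : ℤ → Set X)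
    (h𝒰 : ∀ (m : ℤ) (v : X), v ∈ 𝒰 m ↔
      ∃ x : ℤ → X, x m = v ∧ (∀ n : ℤ, n ≤ m → x n = A (n - 1) (x (n - 1))) ∧
        ∃ C : ℝ, ∀ n : ℤ, n ≤ m → ‖x n‖ ≤ C)
    (m : ℤ) :
    (∀ v ∈ 𝒰 m, A m v ∈ 𝒰 (m + 1)) ∧
    (∀ v ∈ 𝒰 m, ∀ w ∈ 𝒰 m, A m v = A m w → v = w) ∧
    (∀ w ∈ 𝒰 (m + 1), ∃ v ∈ 𝒰 m, A m v = w) := by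
  refine ⟨?_, ?_, ?_⟩
  · intro v hv
    obtain ⟨x, hxm, hrec, C, hC⟩ := (h𝒰 m v).1 hv
    refine (h𝒰 (m + 1) (A m v)).2 ⟨fun n => if n ≤ m then x n else A m v, ?_, ?_, ?_⟩
    · simp
    · intro n hn
      rcases lt_or_eq_of_le hn with h | h
      · have hn' : n ≤ m := by omega
        have hn1 : n - 1 ≤ m := by omega
        simp only [if_pos hn', if_pos hn1]
        exact hrec n hn'
      · subst h
        have h1 : ¬ (m + 1 ≤ m) := by omega
        have h2 : m + 1 - 1 ≤ m := by omega
        simp only [if_neg h1, if_pos h2, show m + 1 - 1 = m from by ring, hxm, le_refl, if_true]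
    · refine ⟨max C ‖A m v‖, fun n _ => ?_⟩
      by_cases h : n ≤ m
      · simp only [if_pos h]
        exact le_max_of_le_left (hC n h)
      · simp only [if_neg h]
        exact le_max_right _ _
  · intro v hv w hw hAvw
    obtain ⟨x, hxm, hrec, C, hC⟩ := (h𝒰 m v).1 hv
    obtain ⟨x', hx'm, hrec', C', hC'⟩ := (h𝒰 m w).1 hw
    set z : ℤ → X := fun n => if n ≤ m then x n - x' n else 0 with hz
    have hzsol : ∀ n : ℤ, z (n + 1) = A n (z n) := by
      intro n
      by_cases h1 : n + 1 ≤ m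
      · have h2 : n ≤ m := by omega
        simp only [hz, if_pos h1, if_pos h2, map_sub]
        have e1 := hrec (n + 1) h1
        have e2 := hrec' (n + 1) h1
        simp only [add_sub_cancel_right] at e1 e2
        rw [e1, e2]
      · by_cases h2 : n ≤ m
        · have : n = m := by omega
          subst this
          simp only [hz, if_neg h1, if_pos h2, map_sub, hxm, hx'm, hAvw, sub_self]
        · have h3 : ¬ (n + 1 ≤ m) := by omega
          simp [hz, h3, h2]
    have hCnn : (0 : ℝ) ≤ C := (norm_nonneg _).trans (hC m le_rfl)
    have hC'nn : (0 : ℝ) ≤ C' := (norm_nonneg _).trans (hC' m le_rfl)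
    have hbd : ∃ D : ℝ, ∀ n, ‖z n‖ ≤ D := by
      refine ⟨C + C', fun n => ?_⟩
      by_cases h : n ≤ m
      · simp only [hz, if_pos h]
        exact (norm_sub_le _ _).trans (add_le_add (hC n h) (hC' n h))
      · simp only [hz, if_neg h, norm_zero]
        linarith
    have hzero := huniq z hzsol hbd m
    simp only [hz, if_pos le_rfl] at hzero
    rw [← hxm, ← hx'm]
    exact sub_eq_zero.mp hzero
  · intro w hw
    obtain ⟨x, hxm1, hrec, C, hC⟩ := (h𝒰 (m + 1) w).1 hw
    refine ⟨x m, (h𝒰 m (x m)).2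
      ⟨x, rfl, fun n hn => hrec n (by omega), C, fun n hn => hC n (by omega)⟩, ?_⟩
    have e := hrec (m + 1) le_rfl
    simp only [add_sub_cancel_right] at e
    rw [← hxm1, e]
end

section
/- Under the same uniqueness property (the only bounded two-sided solution of x(n+1) = A(n)x(n) is 0), the stable and unstable subspaces intersect trivially: S(m) ∩ 𝒰(m) = {0} for every m ∈ ℤ. -/
/-- under the uniqueness property (the only bounded two-sided solution of
`x(n+1) = A(n)x(n)` is zero), the stable and unstable subspaces intersect trivially:
`S(m) ∩ 𝒰(m) = {0}` for every `m`. -/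
theorem stmt_9 {X : Type*} [NormedAddCommGroup X] [NormedSpace ℝ X] [CompleteSpace X]
    (A : ℤ → X →L[ℝ] X) (U : ℤ → ℤ → X →L[ℝ] X)
    (hU0 : ∀ m : ℤ, U m m = 1)
    (hUstep : ∀ n m : ℤ, m ≤ n → U (n + 1) m = (A n).comp (U n m))
    (huniq : ∀ x : ℤ → X, (∀ n : ℤ, x (n + 1) = A n (x n)) →
      (∃ C : ℝ, ∀ n : ℤ, ‖x n‖ ≤ C) → ∀ n : ℤ, x n = 0)
    (m : ℤ) (v : X)
    (hvS : ∃ C : ℝ, ∀ n : ℤ, m ≤ n → ‖U n m v‖ ≤ C)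
    (hvU : ∃ x : ℤ → X, x m = v ∧ (∀ n : ℤ, n ≤ m → x n = A (n - 1) (x (n - 1))) ∧
      ∃ C : ℝ, ∀ n : ℤ, n ≤ m → ‖x n‖ ≤ C) :
    v = 0 := by
  obtain ⟨C1, hC1⟩ := hvS
  obtain ⟨x, hxm, hxrec, C2, hC2⟩ := hvU
  set y : ℤ → X := fun n => if n ≤ m then x n else U n m v with hy
  have hrec : ∀ n : ℤ, y (n + 1) = A n (y n) := by
    intro n
    by_cases h : n + 1 ≤ m
    · have hn : n ≤ m := le_trans (by omega) h
      simp only [hy, if_pos h, if_pos hn]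
      have := hxrec (n + 1) h
      simpa using this
    · have hmn : m ≤ n := by omega
      have hyn : y n = U n m v := by
        by_cases h2 : n ≤ m
        · have : n = m := le_antisymm h2 hmn
          subst this
          simp [hy, hxm, hU0]
        · simp [hy, h2]
      simp only [hy, if_neg h]
      rw [hUstep n m hmn]
      have h3 : (if n ≤ m then x n else (U n m) v) = U n m v := hyn
      rw [h3]
      rfl
  have hbdd : ∃ C : ℝ, ∀ n : ℤ, ‖y n‖ ≤ C := by
    refine ⟨max C1 C2, fun n => ?_⟩
    by_cases h : n ≤ m
    · simp only [hy, if_pos h]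
      exact le_trans (hC2 n h) (le_max_right _ _)
    · simp only [hy, if_neg h]
      exact le_trans (hC1 n (by omega)) (le_max_left _ _)
  have := huniq y hrec hbdd m
  simpa [hy, hxm] using this
end

section
/- Let X be a Banach space with an exponential dichotomy along an orbit: Green function G(n,k) with ‖G(n,k)‖ ≤ K(k) e^{-α|n−k|} for tempered K and α > 0, and a perturbation C(n) ∈ L(X) with ‖C(n)‖ ≤ ρ/K(n+1) for a constant ρ ≥ 0. Fix β ∈ (−α, α) and define, for f in the weighted space with sup_k K(k)e^{-βk}|f(k)| < ∞, the map Υ on ℓ^∞_{1,β}(ℤ) by (Υx)(n) = Σ_{k∈ℤ} G(n,k)( C(k−1)x(k−1) + f(k) ). Then Υ maps ℓ^∞_{1,β}(ℤ) into itself and is Lipschitz with constant ρ e^{-β} ( 1/(1−e^{-(α+β)}) + e^{-(α−β)}/(1−e^{-(α−β)}) ) with respect to the norm sup_n e^{-βn}|x(n)|. In particular, if this constant is < 1, Υ has a unique fixed point x, and x satisfies x(n+1) = (A(n)+C(n))x(n) + f(n+1) for all n ∈ ℤ. -/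
/-!
The dichotomy bound `‖G n k‖ ≤ K k e^{-α|n-k|}` cancels the factor `1 / K k` carried by both
`C (k - 1)` and `f k`, so in the weight `e^{-βn}` every estimate reduces to the two-sided
geometric series `∑_{j ∈ ℤ} e^{-α|j| + βj}`, whose value is the constant of the statement.
Multiplying by the weight identifies `ℓ^∞_{1,β}(ℤ)` with `ℓ^∞(ℤ, X)`, where Banach's fixed
point theorem applies; the fixed point solves the perturbed equation because `G` is the Green
function of the unperturbed one.
-/

open Real
open scoped ENNReal

noncomputable def twoSidedExpSum (α β : ℝ) : ℝ :=
  1 / (1 - exp (-(α + β))) + exp (-(α - β)) / (1 - exp (-(α - β)))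

theorem hasSum_exp_neg_mul_abs_add_mul {α β : ℝ} (hβ : |β| < α) :
    HasSum (fun j : ℤ => exp (-α * |(j : ℝ)| + β * j)) (twoSidedExpSum α β) := by
  obtain ⟨hβ₁, hβ₂⟩ := abs_lt.mp hβ
  set a := exp (-(α - β))
  set b := exp (-(α + β))
  have ha : a < 1 := exp_lt_one_iff.mpr (by linarith)
  have hb : b < 1 := exp_lt_one_iff.mpr (by linarith)
  have hnonneg : HasSum (fun m : ℕ => exp (-α * |((m : ℤ) : ℝ)| + β * (m : ℤ))) (1 - a)⁻¹ := by
    refine (hasSum_geometric_of_lt_one (exp_pos _).le ha).congr_fun fun m => ?_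
    rw [← exp_nat_mul, Int.cast_natCast, abs_of_nonneg m.cast_nonneg]
    ring_nf
  have hneg : HasSum (fun m : ℕ => exp (-α * |((-(m + 1) : ℤ) : ℝ)| + β * ((-(m + 1) : ℤ) : ℝ)))
      (b * (1 - b)⁻¹) := by
    refine ((hasSum_geometric_of_lt_one (exp_pos _).le hb).mul_left b).congr_fun fun m => ?_
    push_cast
    rw [abs_neg, abs_of_nonneg (by positivity), ← exp_nat_mul, ← exp_add]
    ring_nf
  have hval : twoSidedExpSum α β = (1 - a)⁻¹ + b * (1 - b)⁻¹ := by
    have : 1 - a ≠ 0 := by linarith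
    have : 1 - b ≠ 0 := by linarith
    show 1 / (1 - b) + a / (1 - a) = _
    field_simp
    ring
  rw [hval]
  exact hnonneg.of_nat_of_neg_add_one hneg

theorem hasSum_exp_neg_mul_abs_sub_mul_exp {α β : ℝ} (hβ : |β| < α) (n : ℤ) :
    HasSum (fun k : ℤ => exp (-α * |(n : ℝ) - k|) * exp (β * k))
      (twoSidedExpSum α β * exp (β * n)) := by
  refine (((Equiv.subRight n).hasSum_iff.mpr (hasSum_exp_neg_mul_abs_add_mul hβ)).mul_right
    (exp (β * n))).congr_fun fun k => ?_
  simp only [Function.comp_apply, Equiv.subRight_apply, Int.cast_sub, ← exp_add]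
  rw [abs_sub_comm]
  ring_nf

section FixedPoint

variable {ι X : Type*} [NormedAddCommGroup X]

theorem existsUnique_memℓp_infty_fixedPoint [CompleteSpace X] {T : (ι → X) → ι → X} {L : ℝ}
    (hL : L < 1) (hT : ∀ x, Memℓp x ∞ → Memℓp (T x) ∞)
    (hlip : ∀ x y D, Memℓp x ∞ → Memℓp y ∞ → (∀ i, ‖x i - y i‖ ≤ D) →
      ∀ i, ‖T x i - T y i‖ ≤ L * D) :
    ∃! x, Memℓp x ∞ ∧ T x = x := by
  let Φ : lp (fun _ : ι => X) ∞ → lp (fun _ : ι => X) ∞ := fun u => ⟨T u, hT u u.2⟩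
  have hΦ : ContractingWith L.toNNReal Φ := by
    refine ⟨Real.toNNReal_lt_one.mpr hL, LipschitzWith.of_dist_le_mul fun u v => ?_⟩
    rw [dist_eq_norm, dist_eq_norm, Real.coe_toNNReal']
    refine lp.norm_le_of_forall_le (by positivity) fun i => ?_
    calc ‖T u i - T v i‖ ≤ L * ‖u - v‖ :=
          hlip u v _ u.2 v.2 (fun j => lp.norm_apply_le_norm ENNReal.top_ne_zero (u - v) j) i
      _ ≤ max L 0 * ‖u - v‖ := by gcongr; exact le_max_left L 0
  have : Nonempty (lp (fun _ : ι => X) ∞) := ⟨0⟩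
  set u := ContractingWith.fixedPoint Φ hΦ
  refine ⟨u, ⟨u.2, congrArg Subtype.val hΦ.fixedPoint_isFixedPt⟩, fun y ⟨hy, hTy⟩ => ?_⟩
  have hfix : Function.IsFixedPt Φ ⟨y, hy⟩ := Subtype.ext hTy
  exact congrArg Subtype.val (hΦ.fixedPoint_unique hfix)

/-- With `w n = exp (-β * n)` this is membership in `ℓ^∞_{1,β}(ℤ)`. -/
def WeightedBounded (w : ι → ℝ) (x : ι → X) : Prop :=
  ∃ C, ∀ i, w i * ‖x i‖ ≤ C

variable [NormedSpace ℝ X]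

theorem weightedBounded_iff_memℓp {w : ι → ℝ} (hw : ∀ i, 0 ≤ w i) {x : ι → X} :
    WeightedBounded w x ↔ Memℓp (fun i => w i • x i) ∞ := by
  simp only [memℓp_infty_iff, bddAbove_def, Set.forall_mem_range, norm_smul, Real.norm_eq_abs,
    abs_of_nonneg (hw _), WeightedBounded]

theorem existsUnique_weightedBounded_fixedPoint [CompleteSpace X] {w : ι → ℝ}
    (hw : ∀ i, 0 < w i) {T : (ι → X) → ι → X} {L : ℝ} (hL : L < 1)
    (hT : ∀ x, WeightedBounded w x → WeightedBounded w (T x))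
    (hlip : ∀ x y D, WeightedBounded w x → WeightedBounded w y →
      (∀ i, w i * ‖x i - y i‖ ≤ D) → ∀ i, w i * ‖T x i - T y i‖ ≤ L * D) :
    ∃! x, WeightedBounded w x ∧ T x = x := by
  have hw0 i := (hw i).le
  let weight (x : ι → X) : ι → X := fun i => w i • x i
  let unweight (u : ι → X) : ι → X := fun i => (w i)⁻¹ • u i
  have weight_unweight u : weight (unweight u) = u := by
    ext i; simp [weight, unweight, smul_smul, (hw i).ne']
  have unweight_weight x : unweight (weight x) = x := by
    ext i; simp [weight, unweight, smul_smul, (hw i).ne']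
  have norm_weight_sub x y i : ‖weight x i - weight y i‖ = w i * ‖x i - y i‖ := by
    rw [← smul_sub, norm_smul, Real.norm_eq_abs, abs_of_pos (hw i)]
  have memℓp_iff u : Memℓp u ∞ ↔ WeightedBounded w (unweight u) := by
    rw [weightedBounded_iff_memℓp hw0]
    change _ ↔ Memℓp (weight (unweight u)) ∞
    rw [weight_unweight]
  obtain ⟨u, ⟨hu, hTu⟩, huniq⟩ := existsUnique_memℓp_infty_fixedPoint
    (T := fun u => weight (T (unweight u))) hL
    (fun u hu => (weightedBounded_iff_memℓp hw0).mp (hT _ ((memℓp_iff u).mp hu)))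
    (fun u v D hu hv huv i => by
      rw [norm_weight_sub]
      refine hlip _ _ D ((memℓp_iff u).mp hu) ((memℓp_iff v).mp hv) (fun j => ?_) i
      rw [← norm_weight_sub, weight_unweight, weight_unweight]
      exact huv j)
  refine ⟨unweight u, ⟨(memℓp_iff u).mp hu, ?_⟩, fun y ⟨hy, hTy⟩ => ?_⟩
  · simpa only [unweight_weight] using congrArg unweight hTu
  · have hwy := huniq (weight y) ⟨(weightedBounded_iff_memℓp hw0).mp hy, by
      simp only [unweight_weight, hTy]⟩
    rw [← hwy, unweight_weight]

end FixedPoint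

section Green

variable {X : Type*} [NormedAddCommGroup X] [NormedSpace ℝ X]
  {G : ℤ → ℤ → X →L[ℝ] X} {K : ℤ → ℝ} {α β c : ℝ} {g : ℤ → X}

theorem norm_green_apply_le (hG : ∀ n k : ℤ, ‖G n k‖ ≤ K k * exp (-α * |(n : ℝ) - (k : ℝ)|))
    (hg : ∀ k : ℤ, K k * exp (-β * k) * ‖g k‖ ≤ c) (n k : ℤ) :
    ‖G n k (g k)‖ ≤ c * (exp (-α * |(n : ℝ) - k|) * exp (β * k)) := by
  have hexp : exp (β * k) * exp (-β * k) = 1 := by rw [← exp_add]; simp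
  calc ‖G n k (g k)‖ ≤ K k * exp (-α * |(n : ℝ) - k|) * ‖g k‖ :=
        (G n k).le_of_opNorm_le (hG n k) _
    _ = exp (-α * |(n : ℝ) - k|) * exp (β * k) * (K k * exp (-β * k) * ‖g k‖) := by
      linear_combination (-(K k * exp (-α * |(n : ℝ) - k|) * ‖g k‖)) * hexp
    _ ≤ exp (-α * |(n : ℝ) - k|) * exp (β * k) * c := by gcongr; exact hg k
    _ = c * (exp (-α * |(n : ℝ) - k|) * exp (β * k)) := mul_comm _ _

theorem summable_green_apply [CompleteSpace X]
    (hG : ∀ n k : ℤ, ‖G n k‖ ≤ K k * exp (-α * |(n : ℝ) - (k : ℝ)|)) (hβ : |β| < α)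
    (hg : ∀ k : ℤ, K k * exp (-β * k) * ‖g k‖ ≤ c) (n : ℤ) :
    Summable fun k => G n k (g k) :=
  ((hasSum_exp_neg_mul_abs_sub_mul_exp hβ n).mul_left c).summable.of_norm_bounded
    (norm_green_apply_le hG hg n)

theorem exp_neg_mul_norm_tsum_green_apply_le
    (hG : ∀ n k : ℤ, ‖G n k‖ ≤ K k * exp (-α * |(n : ℝ) - (k : ℝ)|)) (hβ : |β| < α)
    (hg : ∀ k : ℤ, K k * exp (-β * k) * ‖g k‖ ≤ c) (n : ℤ) :
    exp (-β * n) * ‖∑' k, G n k (g k)‖ ≤ twoSidedExpSum α β * c := by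
  have hexp : exp (-β * n) * exp (β * n) = 1 := by rw [← exp_add]; simp
  calc exp (-β * n) * ‖∑' k, G n k (g k)‖
      ≤ exp (-β * n) * (c * (twoSidedExpSum α β * exp (β * n))) := by
        gcongr
        exact tsum_of_norm_bounded ((hasSum_exp_neg_mul_abs_sub_mul_exp hβ n).mul_left c)
          (norm_green_apply_le hG hg n)
    _ = twoSidedExpSum α β * c := by linear_combination (twoSidedExpSum α β * c) * hexp

end Green

section Perturbation

variable {X : Type*} [NormedAddCommGroup X] [NormedSpace ℝ X]
  {Cop : ℤ → X →L[ℝ] X} {K : ℤ → ℝ} {β ρ c : ℝ} {x : ℤ → X}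

theorem weighted_norm_perturbation_le (hK : ∀ n, 0 < K n) (hρ : 0 ≤ ρ)
    (hC : ∀ n : ℤ, ‖Cop n‖ ≤ ρ / K (n + 1)) (hx : ∀ m : ℤ, exp (-β * m) * ‖x m‖ ≤ c) (k : ℤ) :
    K k * exp (-β * k) * ‖Cop (k - 1) (x (k - 1))‖ ≤ ρ * exp (-β) * c := by
  have hKk := hK k
  have hCk : ‖Cop (k - 1)‖ ≤ ρ / K k := by simpa using hC (k - 1)
  have hsplit : exp (-β * k) = exp (-β) * exp (-β * ((k - 1 : ℤ) : ℝ)) := by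
    rw [← exp_add]; push_cast; ring_nf
  calc K k * exp (-β * k) * ‖Cop (k - 1) (x (k - 1))‖
      ≤ K k * exp (-β * k) * (ρ / K k * ‖x (k - 1)‖) := by
        gcongr; exact (Cop (k - 1)).le_of_opNorm_le hCk _
    _ = ρ * exp (-β) * (exp (-β * ((k - 1 : ℤ) : ℝ)) * ‖x (k - 1)‖) := by
        rw [hsplit]; field_simp
    _ ≤ ρ * exp (-β) * c := by gcongr; exact hx (k - 1)

theorem weighted_norm_forcing_le {f : ℤ → X} {M : ℝ} (hK : ∀ n, 0 < K n) (hρ : 0 ≤ ρ)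
    (hC : ∀ n : ℤ, ‖Cop n‖ ≤ ρ / K (n + 1)) (hf : ∀ k : ℤ, K k * exp (-β * k) * ‖f k‖ ≤ M)
    (hx : ∀ m : ℤ, exp (-β * m) * ‖x m‖ ≤ c) (k : ℤ) :
    K k * exp (-β * k) * ‖Cop (k - 1) (x (k - 1)) + f k‖ ≤ ρ * exp (-β) * c + M := by
  have hKk := hK k
  calc K k * exp (-β * k) * ‖Cop (k - 1) (x (k - 1)) + f k‖
      ≤ K k * exp (-β * k) * (‖Cop (k - 1) (x (k - 1))‖ + ‖f k‖) := by
        gcongr; exact norm_add_le _ _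
    _ ≤ ρ * exp (-β) * c + M := by
        rw [mul_add]
        exact add_le_add (weighted_norm_perturbation_le hK hρ hC hx k) (hf k)

end Perturbation

section PerturbedGreenMap

variable {X : Type*} [NormedAddCommGroup X] [NormedSpace ℝ X]
  {G : ℤ → ℤ → X →L[ℝ] X} {Cop : ℤ → X →L[ℝ] X} {K : ℤ → ℝ} {f : ℤ → X} {α β ρ M : ℝ}

/-- The map `Υ`. -/
noncomputable def perturbedGreenMap (G : ℤ → ℤ → X →L[ℝ] X) (Cop : ℤ → X →L[ℝ] X) (f : ℤ → X)
    (x : ℤ → X) (n : ℤ) : X :=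
  ∑' k, G n k (Cop (k - 1) (x (k - 1)) + f k)

theorem weightedBounded_perturbedGreenMap (hK : ∀ n, 0 < K n) (hβ : |β| < α) (hρ : 0 ≤ ρ)
    (hG : ∀ n k : ℤ, ‖G n k‖ ≤ K k * exp (-α * |(n : ℝ) - (k : ℝ)|))
    (hC : ∀ n : ℤ, ‖Cop n‖ ≤ ρ / K (n + 1)) (hf : ∀ k : ℤ, K k * exp (-β * k) * ‖f k‖ ≤ M)
    {x : ℤ → X} (hx : WeightedBounded (fun n : ℤ => exp (-β * n)) x) :
    WeightedBounded (fun n : ℤ => exp (-β * n)) (perturbedGreenMap G Cop f x) := by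
  obtain ⟨c, hc⟩ := hx
  exact ⟨_, exp_neg_mul_norm_tsum_green_apply_le hG hβ (weighted_norm_forcing_le hK hρ hC hf hc)⟩

theorem weighted_norm_perturbedGreenMap_sub_le [CompleteSpace X] (hK : ∀ n, 0 < K n)
    (hβ : |β| < α) (hρ : 0 ≤ ρ)
    (hG : ∀ n k : ℤ, ‖G n k‖ ≤ K k * exp (-α * |(n : ℝ) - (k : ℝ)|))
    (hC : ∀ n : ℤ, ‖Cop n‖ ≤ ρ / K (n + 1)) (hf : ∀ k : ℤ, K k * exp (-β * k) * ‖f k‖ ≤ M)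
    {x y : ℤ → X} {D : ℝ} (hx : WeightedBounded (fun n : ℤ => exp (-β * n)) x)
    (hy : WeightedBounded (fun n : ℤ => exp (-β * n)) y)
    (hxy : ∀ n : ℤ, exp (-β * n) * ‖x n - y n‖ ≤ D) (n : ℤ) :
    exp (-β * n) * ‖perturbedGreenMap G Cop f x n - perturbedGreenMap G Cop f y n‖ ≤
      ρ * exp (-β) * twoSidedExpSum α β * D := by
  obtain ⟨cx, hcx⟩ := hx
  obtain ⟨cy, hcy⟩ := hy
  have hdiff : perturbedGreenMap G Cop f x n - perturbedGreenMap G Cop f y n =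
      ∑' k, G n k (Cop (k - 1) (x (k - 1) - y (k - 1))) := by
    rw [perturbedGreenMap, perturbedGreenMap,
      ← (summable_green_apply hG hβ (weighted_norm_forcing_le hK hρ hC hf hcx) n).tsum_sub
        (summable_green_apply hG hβ (weighted_norm_forcing_le hK hρ hC hf hcy) n)]
    simp only [← map_sub, add_sub_add_right_eq_sub]
  rw [hdiff]
  calc _ ≤ twoSidedExpSum α β * (ρ * exp (-β) * D) :=
        exp_neg_mul_norm_tsum_green_apply_le hG hβ
          (weighted_norm_perturbation_le (x := fun m => x m - y m) hK hρ hC hxy) n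
    _ = ρ * exp (-β) * twoSidedExpSum α β * D := by ring

theorem perturbedGreenMap_fixedPoint_eq (hK : ∀ n, 0 < K n) (hρ : 0 ≤ ρ)
    (hC : ∀ n : ℤ, ‖Cop n‖ ≤ ρ / K (n + 1)) (hf : ∀ k : ℤ, K k * exp (-β * k) * ‖f k‖ ≤ M)
    {A : ℤ → X →L[ℝ] X}
    (hGreen : ∀ g : ℤ → X, WeightedBounded (fun k : ℤ => K k * exp (-β * k)) g →
      ∀ n : ℤ, ∑' k, G (n + 1) k (g k) = A n (∑' k, G n k (g k)) + g (n + 1))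
    {x : ℤ → X} (hx : WeightedBounded (fun n : ℤ => exp (-β * n)) x)
    (hfix : perturbedGreenMap G Cop f x = x) (n : ℤ) :
    x (n + 1) = A n (x n) + Cop n (x n) + f (n + 1) := by
  obtain ⟨c, hc⟩ := hx
  have hstep := hGreen _ ⟨_, weighted_norm_forcing_le hK hρ hC hf hc⟩ n
  change perturbedGreenMap G Cop f x (n + 1) = A n (perturbedGreenMap G Cop f x n) + _ at hstep
  rw [hfix, add_sub_cancel_right, ← add_assoc] at hstep
  exact hstep

end PerturbedGreenMap

theorem stmt_14_general {X : Type*} [NormedAddCommGroup X] [NormedSpace ℝ X] [CompleteSpace X]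
    (A Cop : ℤ → X →L[ℝ] X) (G : ℤ → ℤ → X →L[ℝ] X)
    (K : ℤ → ℝ) (α β ρ M : ℝ) (f : ℤ → X)
    (hK : ∀ n, 0 < K n) (hβ : |β| < α) (hρ : 0 ≤ ρ)
    (hG : ∀ n k : ℤ, ‖G n k‖ ≤ K k * Real.exp (-α * |(n : ℝ) - (k : ℝ)|))
    (hC : ∀ n : ℤ, ‖Cop n‖ ≤ ρ / K (n + 1))
    (hf : ∀ k : ℤ, K k * Real.exp (-β * (k : ℝ)) * ‖f k‖ ≤ M)
    (hGreen : ∀ g : ℤ → X,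
      (∃ C0 : ℝ, ∀ k : ℤ, K k * Real.exp (-β * (k : ℝ)) * ‖g k‖ ≤ C0) →
      ∀ n : ℤ, (∑' k : ℤ, G (n + 1) k (g k)) = A n (∑' k : ℤ, G n k (g k)) + g (n + 1))
    (Υ : (ℤ → X) → ℤ → X)
    (hΥ : ∀ (x : ℤ → X) (n : ℤ),
      Υ x n = ∑' k : ℤ, G n k (Cop (k - 1) (x (k - 1)) + f k)) :
    (∀ x : ℤ → X, (∃ C0 : ℝ, ∀ n : ℤ, Real.exp (-β * (n : ℝ)) * ‖x n‖ ≤ C0) →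
      ∃ C1 : ℝ, ∀ n : ℤ, Real.exp (-β * (n : ℝ)) * ‖Υ x n‖ ≤ C1) ∧
    (∀ x y : ℤ → X, ∀ D : ℝ,
      (∃ C0 : ℝ, ∀ n : ℤ, Real.exp (-β * (n : ℝ)) * ‖x n‖ ≤ C0) →
      (∃ C0 : ℝ, ∀ n : ℤ, Real.exp (-β * (n : ℝ)) * ‖y n‖ ≤ C0) →
      (∀ n : ℤ, Real.exp (-β * (n : ℝ)) * ‖x n - y n‖ ≤ D) →
      ∀ n : ℤ, Real.exp (-β * (n : ℝ)) * ‖Υ x n - Υ y n‖ ≤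
        ρ * Real.exp (-β) *
          (1 / (1 - Real.exp (-(α + β))) +
            Real.exp (-(α - β)) / (1 - Real.exp (-(α - β)))) * D) ∧
    (ρ * Real.exp (-β) *
        (1 / (1 - Real.exp (-(α + β))) +
          Real.exp (-(α - β)) / (1 - Real.exp (-(α - β)))) < 1 →
      ∃ x : ℤ → X,
        (∃ C1 : ℝ, ∀ n : ℤ, Real.exp (-β * (n : ℝ)) * ‖x n‖ ≤ C1) ∧
        (∀ n : ℤ, Υ x n = x n) ∧
        (∀ n : ℤ, x (n + 1) = A n (x n) + Cop n (x n) + f (n + 1)) ∧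
        (∀ y : ℤ → X, (∃ C1 : ℝ, ∀ n : ℤ, Real.exp (-β * (n : ℝ)) * ‖y n‖ ≤ C1) →
          (∀ n : ℤ, Υ y n = y n) → y = x)) := by
  obtain rfl : Υ = perturbedGreenMap G Cop f := funext fun x => funext (hΥ x)
  have maps_to x := weightedBounded_perturbedGreenMap (x := x) hK hβ hρ hG hC hf
  have lipschitz x y D := weighted_norm_perturbedGreenMap_sub_le (x := x) (y := y) (D := D)
    hK hβ hρ hG hC hf
  refine ⟨maps_to, lipschitz, fun hL => ?_⟩
  obtain ⟨x, ⟨hx, hfix⟩, huniq⟩ :=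
    existsUnique_weightedBounded_fixedPoint (fun n : ℤ => exp_pos (-β * n)) hL maps_to lipschitz
  exact ⟨x, hx, congrFun hfix, perturbedGreenMap_fixedPoint_eq hK hρ hC hf hGreen hx hfix,
    fun y hy hyfix => huniq y ⟨hy, funext hyfix⟩⟩

/-- the perturbation operator
`(Υx)(n) = Σ_k G(n,k)(C(k-1)x(k-1) + f(k))` maps `ℓ^∞_{1,β}(ℤ)` into itself, is
Lipschitz with constant `ρ e^{-β}(1/(1-e^{-(α+β)}) + e^{-(α-β)}/(1-e^{-(α-β)}))`, and
if this constant is `< 1`, its unique fixed point solves the perturbed equation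
`x(n+1) = (A(n)+C(n))x(n) + f(n+1)`. -/
theorem stmt_14 {X : Type*} [NormedAddCommGroup X] [NormedSpace ℝ X] [CompleteSpace X]
    (A Cop : ℤ → X →L[ℝ] X) (G : ℤ → ℤ → X →L[ℝ] X)
    (K : ℤ → ℝ) (α β ρ M : ℝ) (f : ℤ → X)
    (hK : ∀ n, 0 < K n) (hα : 0 < α) (hβ : |β| < α) (hρ : 0 ≤ ρ)
    (hG : ∀ n k : ℤ, ‖G n k‖ ≤ K k * Real.exp (-α * |(n : ℝ) - (k : ℝ)|))
    (hC : ∀ n : ℤ, ‖Cop n‖ ≤ ρ / K (n + 1))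
    (hf : ∀ k : ℤ, K k * Real.exp (-β * (k : ℝ)) * ‖f k‖ ≤ M)
    (hGreen : ∀ g : ℤ → X,
      (∃ C0 : ℝ, ∀ k : ℤ, K k * Real.exp (-β * (k : ℝ)) * ‖g k‖ ≤ C0) →
      ∀ n : ℤ, (∑' k : ℤ, G (n + 1) k (g k)) = A n (∑' k : ℤ, G n k (g k)) + g (n + 1))
    (Υ : (ℤ → X) → ℤ → X)
    (hΥ : ∀ (x : ℤ → X) (n : ℤ),
      Υ x n = ∑' k : ℤ, G n k (Cop (k - 1) (x (k - 1)) + f k)) :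
    (∀ x : ℤ → X, (∃ C0 : ℝ, ∀ n : ℤ, Real.exp (-β * (n : ℝ)) * ‖x n‖ ≤ C0) →
      ∃ C1 : ℝ, ∀ n : ℤ, Real.exp (-β * (n : ℝ)) * ‖Υ x n‖ ≤ C1) ∧
    (∀ x y : ℤ → X, ∀ D : ℝ,
      (∃ C0 : ℝ, ∀ n : ℤ, Real.exp (-β * (n : ℝ)) * ‖x n‖ ≤ C0) →
      (∃ C0 : ℝ, ∀ n : ℤ, Real.exp (-β * (n : ℝ)) * ‖y n‖ ≤ C0) →
      (∀ n : ℤ, Real.exp (-β * (n : ℝ)) * ‖x n - y n‖ ≤ D) →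
      ∀ n : ℤ, Real.exp (-β * (n : ℝ)) * ‖Υ x n - Υ y n‖ ≤
        ρ * Real.exp (-β) *
          (1 / (1 - Real.exp (-(α + β))) +
            Real.exp (-(α - β)) / (1 - Real.exp (-(α - β)))) * D) ∧
    (ρ * Real.exp (-β) *
        (1 / (1 - Real.exp (-(α + β))) +
          Real.exp (-(α - β)) / (1 - Real.exp (-(α - β)))) < 1 →
      ∃ x : ℤ → X,
        (∃ C1 : ℝ, ∀ n : ℤ, Real.exp (-β * (n : ℝ)) * ‖x n‖ ≤ C1) ∧
        (∀ n : ℤ, Υ x n = x n) ∧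
        (∀ n : ℤ, x (n + 1) = A n (x n) + Cop n (x n) + f (n + 1)) ∧
        (∀ y : ℤ → X, (∃ C1 : ℝ, ∀ n : ℤ, Real.exp (-β * (n : ℝ)) * ‖y n‖ ≤ C1) →
          (∀ n : ℤ, Υ y n = y n) → y = x)) :=
  stmt_14_general A Cop G K α β ρ M f hK hβ hρ hG hC hf hGreen Υ hΥ
end

section
/- Let Π₁ and Π₂ be projections arising from two exponential dichotomies with common exponent α̃ > 0 and common bound κK(n) (κ constant, K tempered), whose Green functions G₁, G₂ satisfy ‖G_i(n,k)‖ ≤ κ K(k) e^{-α̃|n−k|} and the resolvent-type identity Π₂(0) = Π₁(0) + Σ_{k∈ℤ} G₁(0,k)·C(k−1)·G₂(k−1, 0), where C satisfies the σ-Hölder bound ‖C(k)‖ ≤ υ|ξ₂−ξ₁|^σ / K(k+1). Then ‖Π₂ − Π₁‖ ≤ κ² υ K(0) (1 + e^{-2α̃})/(1 − e^{-2α̃}) · |ξ₂ − ξ₁|^σ. -/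
theorem exp_sum_aux (αt : ℝ) (hαt : 0 < αt) :
    Summable (fun k : ℤ => Real.exp (-αt * |(k : ℝ)|) * Real.exp (-αt * |(k : ℝ) - 1|)) ∧
    (∑' k : ℤ, Real.exp (-αt * |(k : ℝ)|) * Real.exp (-αt * |(k : ℝ) - 1|)) ≤
      (1 + Real.exp (-(2 * αt))) / (1 - Real.exp (-(2 * αt))) := by
  set e := Real.exp (-αt) with he
  set r := Real.exp (-(2 * αt)) with hrdef
  have he0 : 0 < e := Real.exp_pos _
  have he1 : e < 1 := Real.exp_lt_one_iff.mpr (by linarith)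
  have hr0 : 0 < r := Real.exp_pos _
  have hr1 : r < 1 := Real.exp_lt_one_iff.mpr (by linarith)
  have hre : r = e ^ 2 := by
    rw [hrdef, he, sq, ← Real.exp_add]; ring_nf
  set E : ℤ → ℝ := fun k => Real.exp (-αt * |(k : ℝ)|) * Real.exp (-αt * |(k : ℝ) - 1|) with hE
  have hrn : ∀ n : ℕ, r ^ n = Real.exp (-(2 * αt) * n) := by
    intro n; rw [hrdef, ← Real.exp_nat_mul]; ring_nf
  have hpos : ∀ n : ℕ, E ((n : ℤ) + 1) = e * r ^ n := by
    intro n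
    have h1 : |((((n : ℤ) + 1) : ℤ) : ℝ)| = (n : ℝ) + 1 := by
      push_cast; rw [abs_of_nonneg]; positivity
    have h2 : |((((n : ℤ) + 1) : ℤ) : ℝ) - 1| = (n : ℝ) := by
      push_cast; simp [abs_of_nonneg]
    rw [hE]; simp only [h1, h2]
    rw [he, hrn, ← Real.exp_add, ← Real.exp_add]
    congr 1; ring
  have hneg : ∀ n : ℕ, E (-(n : ℤ) - 1) = (e * r) * r ^ n := by
    intro n
    have hn : (0:ℝ) ≤ (n:ℝ) := Nat.cast_nonneg n
    have h1 : |(((-(n : ℤ) - 1) : ℤ) : ℝ)| = (n : ℝ) + 1 := by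
      push_cast; rw [abs_of_nonpos (by linarith)]; ring
    have h2 : |(((-(n : ℤ) - 1) : ℤ) : ℝ) - 1| = (n : ℝ) + 2 := by
      push_cast; rw [abs_of_nonpos (by linarith)]; ring
    rw [hE]; simp only [h1, h2]
    rw [he, hrdef, hrn, ← Real.exp_add, ← Real.exp_add, ← Real.exp_add]
    congr 1; ring
  have hE0 : E 0 = e := by
    rw [hE]; norm_num [he]
  have hEnn : ∀ k : ℤ, 0 ≤ E k := fun k => by positivity
  have hpos' : ∀ n : ℕ, E (↑(n + 1) : ℤ) = e * r ^ n := by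
    intro n
    rw [show ((↑(n + 1) : ℤ)) = (n : ℤ) + 1 by push_cast; ring, hpos n]
  have hneg' : ∀ n : ℕ, E (-(↑(n + 1) : ℤ)) = (e * r) * r ^ n := by
    intro n
    rw [show (-(↑(n + 1) : ℤ)) = -(n : ℤ) - 1 by push_cast; ring, hneg n]
  have hsum1 : Summable (fun n : ℕ => E n) := by
    rw [← summable_nat_add_iff 1]
    exact ((summable_geometric_of_lt_one hr0.le hr1).mul_left e).congr
      (fun n => (hpos' n).symm)
  have hsum2 : Summable (fun n : ℕ => E (-(n : ℤ))) := by
    rw [← summable_nat_add_iff 1]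
    exact ((summable_geometric_of_lt_one hr0.le hr1).mul_left (e * r)).congr
      (fun n => (hneg' n).symm)
  have hsum2' : Summable (fun n : ℕ => E (-(↑(n + 1) : ℤ))) :=
    ((summable_geometric_of_lt_one hr0.le hr1).mul_left (e * r)).congr
      (fun n => (hneg' n).symm)
  have hsumE : Summable E := hsum1.of_nat_of_neg hsum2
  refine ⟨hsumE, ?_⟩
  have hgeo : ∑' n : ℕ, r ^ n = (1 - r)⁻¹ := tsum_geometric_of_lt_one hr0.le hr1
  have hsplit : ∑' k : ℤ, E k = (∑' n : ℕ, E n) + ∑' n : ℕ, E (-(↑(n + 1) : ℤ)) :=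
    tsum_of_nat_of_neg_add_one hsum1 hsum2'
  have hposum : ∑' n : ℕ, E n = e + e * (1 - r)⁻¹ := by
    rw [Summable.tsum_eq_zero_add hsum1]
    simp only [hpos']
    rw [tsum_mul_left, hgeo]
    norm_num [hE0]
  have hnegsum : ∑' n : ℕ, E (-(↑(n + 1) : ℤ)) = (e * r) * (1 - r)⁻¹ := by
    simp only [hneg']
    rw [tsum_mul_left, hgeo]
  rw [hsplit, hposum, hnegsum, div_eq_mul_inv]
  have h1r : 0 < 1 - r := by linarith
  rw [← sub_nonneg]
  have heq : (1 + r) * (1 - r)⁻¹ - (e + e * (1 - r)⁻¹ + e * r * (1 - r)⁻¹)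
      = (1 + r - e * (1 - r) - e - e * r) * (1 - r)⁻¹ := by
    field_simp; ring
  rw [heq]
  apply mul_nonneg _ (by positivity)
  nlinarith [sq_nonneg (1 - e), hre]



/-- Hölder continuity of dichotomy projections in the parameter: from the
resolvent identity `Pr₂ = Pr₁ + Σ_k G₁(0,k) C(k-1) G₂(k-1,0)`, the Green-function bounds
`‖G_i(n,k)‖ ≤ κK(k)e^{-α̃|n-k|}` and the perturbation bound
`‖C(k)‖ ≤ υ‖ξ₂-ξ₁‖^σ/K(k+1)`, one gets
`‖Pr₂ - Pr₁‖ ≤ κ²υK(0)(1+e^{-2α̃})/(1-e^{-2α̃})·‖ξ₂-ξ₁‖^σ`. -/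
theorem stmt_15 {X Ξ : Type*} [NormedAddCommGroup X] [NormedSpace ℝ X]
    [NormedAddCommGroup Ξ]
    (Pr₁ Pr₂ : X →L[ℝ] X) (G₁ G₂ : ℤ → ℤ → X →L[ℝ] X) (Cop : ℤ → X →L[ℝ] X)
    (κ υ σ αt : ℝ) (K : ℤ → ℝ) (ξ₁ ξ₂ : Ξ)
    (hκ : 0 < κ) (hυ : 0 < υ) (hσ : 0 < σ) (hσ1 : σ ≤ 1) (hαt : 0 < αt)
    (hK : ∀ k, 0 < K k)
    (hG₁ : ∀ n k : ℤ, ‖G₁ n k‖ ≤ κ * K k * Real.exp (-αt * |(n : ℝ) - (k : ℝ)|))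
    (hG₂ : ∀ n k : ℤ, ‖G₂ n k‖ ≤ κ * K k * Real.exp (-αt * |(n : ℝ) - (k : ℝ)|))
    (hC : ∀ k : ℤ, ‖Cop k‖ ≤ υ * ‖ξ₂ - ξ₁‖ ^ σ / K (k + 1))
    (hsum : ∀ v : X, Summable fun k : ℤ => ‖G₁ 0 k (Cop (k - 1) (G₂ (k - 1) 0 v))‖)
    (hres : ∀ v : X, Pr₂ v = Pr₁ v + ∑' k : ℤ, G₁ 0 k (Cop (k - 1) (G₂ (k - 1) 0 v))) :
    ‖Pr₂ - Pr₁‖ ≤ κ ^ 2 * υ * K 0 *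
      ((1 + Real.exp (-(2 * αt))) / (1 - Real.exp (-(2 * αt)))) *
      ‖ξ₂ - ξ₁‖ ^ σ := by
  obtain ⟨hsumE, htsumE⟩ := exp_sum_aux αt hαt
  set E : ℤ → ℝ := fun k => Real.exp (-αt * |(k : ℝ)|) * Real.exp (-αt * |(k : ℝ) - 1|)
    with hE
  have hh0 : 0 ≤ ‖ξ₂ - ξ₁‖ ^ σ := Real.rpow_nonneg (norm_nonneg _) σ
  have hEnn : ∀ k : ℤ, 0 ≤ E k := fun k => by rw [hE]; positivity
  have h1r : 0 < 1 - Real.exp (-(2 * αt)) := by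
    have : Real.exp (-(2 * αt)) < 1 := Real.exp_lt_one_iff.mpr (by linarith)
    linarith
  have hterm : ∀ (v : X) (k : ℤ), ‖G₁ 0 k (Cop (k - 1) (G₂ (k - 1) 0 v))‖ ≤
      κ ^ 2 * υ * K 0 * ‖ξ₂ - ξ₁‖ ^ σ * E k * ‖v‖ := by
    intro v k
    have b1 : ‖G₁ 0 k‖ ≤ κ * K k * Real.exp (-αt * |(k : ℝ)|) := by
      have := hG₁ 0 k
      simpa [abs_sub_comm] using this
    have b2 : ‖Cop (k - 1)‖ ≤ υ * ‖ξ₂ - ξ₁‖ ^ σ / K k := by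
      have := hC (k - 1)
      rwa [show k - 1 + 1 = k by ring] at this
    have b3 : ‖G₂ (k - 1) 0 v‖ ≤ κ * K 0 * Real.exp (-αt * |(k : ℝ) - 1|) * ‖v‖ := by
      refine le_trans (ContinuousLinearMap.le_opNorm _ _) ?_
      refine mul_le_mul_of_nonneg_right ?_ (norm_nonneg v)
      have := hG₂ (k - 1) 0
      have hc : |((k - 1 : ℤ) : ℝ) - ((0 : ℤ) : ℝ)| = |(k : ℝ) - 1| := by
        push_cast; ring_nf
      rwa [hc] at this
    have hKk := hK k
    have c2 : (0:ℝ) ≤ υ * ‖ξ₂ - ξ₁‖ ^ σ / K k := by positivity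
    calc ‖G₁ 0 k (Cop (k - 1) (G₂ (k - 1) 0 v))‖
        ≤ ‖G₁ 0 k‖ * ‖Cop (k - 1) (G₂ (k - 1) 0 v)‖ :=
          ContinuousLinearMap.le_opNorm _ _
      _ ≤ ‖G₁ 0 k‖ * (‖Cop (k - 1)‖ * ‖G₂ (k - 1) 0 v‖) :=
          mul_le_mul_of_nonneg_left (ContinuousLinearMap.le_opNorm _ _) (norm_nonneg _)
      _ ≤ (κ * K k * Real.exp (-αt * |(k : ℝ)|)) *
            ((υ * ‖ξ₂ - ξ₁‖ ^ σ / K k) *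
              (κ * K 0 * Real.exp (-αt * |(k : ℝ) - 1|) * ‖v‖)) := by
          refine mul_le_mul b1 ?_ (by positivity) (by positivity)
          exact mul_le_mul b2 b3 (norm_nonneg _) c2
      _ = κ ^ 2 * υ * K 0 * ‖ξ₂ - ξ₁‖ ^ σ * E k * ‖v‖ := by
          rw [hE]
          field_simp
  have hbsum : ∀ v : X, Summable fun k : ℤ =>
      κ ^ 2 * υ * K 0 * ‖ξ₂ - ξ₁‖ ^ σ * E k * ‖v‖ := by
    intro v
    have := (hsumE.mul_left (κ ^ 2 * υ * K 0 * ‖ξ₂ - ξ₁‖ ^ σ)).mul_right ‖v‖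
    exact this.congr (fun k => by ring)
  refine ContinuousLinearMap.opNorm_le_bound _
    (mul_nonneg (mul_nonneg (mul_nonneg (by positivity) (hK 0).le)
      (div_nonneg (by positivity) h1r.le)) hh0) (fun v => ?_)
  have hv : (Pr₂ - Pr₁) v = ∑' k : ℤ, G₁ 0 k (Cop (k - 1) (G₂ (k - 1) 0 v)) := by
    rw [ContinuousLinearMap.sub_apply, hres v, add_sub_cancel_left]
  rw [hv]
  calc ‖∑' k : ℤ, G₁ 0 k (Cop (k - 1) (G₂ (k - 1) 0 v))‖
      ≤ ∑' k : ℤ, ‖G₁ 0 k (Cop (k - 1) (G₂ (k - 1) 0 v))‖ :=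
        norm_tsum_le_tsum_norm (hsum v)
    _ ≤ ∑' k : ℤ, κ ^ 2 * υ * K 0 * ‖ξ₂ - ξ₁‖ ^ σ * E k * ‖v‖ :=
        Summable.tsum_le_tsum (hterm v) (hsum v) (hbsum v)
    _ = κ ^ 2 * υ * K 0 * ‖ξ₂ - ξ₁‖ ^ σ * (∑' k : ℤ, E k) * ‖v‖ := by
        rw [← tsum_mul_left]
        rw [← tsum_mul_right]
    _ ≤ κ ^ 2 * υ * K 0 * ((1 + Real.exp (-(2 * αt))) / (1 - Real.exp (-(2 * αt)))) *
          ‖ξ₂ - ξ₁‖ ^ σ * ‖v‖ := by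
        have h2 : κ ^ 2 * υ * K 0 * ‖ξ₂ - ξ₁‖ ^ σ * (∑' k : ℤ, E k) ≤
            κ ^ 2 * υ * K 0 * ‖ξ₂ - ξ₁‖ ^ σ *
              ((1 + Real.exp (-(2 * αt))) / (1 - Real.exp (-(2 * αt)))) := by
          refine mul_le_mul_of_nonneg_left htsumE
            (mul_nonneg (mul_nonneg (by positivity) (hK 0).le) hh0)
        refine mul_le_mul_of_nonneg_right ?_ (norm_nonneg v)
        calc κ ^ 2 * υ * K 0 * ‖ξ₂ - ξ₁‖ ^ σ * (∑' k : ℤ, E k) ≤ _ := h2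
          _ = κ ^ 2 * υ * K 0 * ((1 + Real.exp (-(2 * αt))) / (1 - Real.exp (-(2 * αt)))) *
              ‖ξ₂ - ξ₁‖ ^ σ := by ring
end
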